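/- Fix n ∈ ℕ, data x_1,…,x_n ∈ ℝ^d with ‖x_k‖₂ ≤ 1, weights w_1,…,w_m, w̃_1,…,w̃_m ∈ ℝ^d with ‖w̃_r − w_r‖₂ ≤ R ≤ 0.025 and |⟨w_r, x_k⟩| ≤ B for all r, k. Define H(w)_{i,j} = (1/m) ∑_{r=1}^m ⟨x_i, x_j⟩ exp(⟨w_r, x_i⟩) exp(⟨w_r, x_j⟩), and similarly H(w̃). Then ‖H(w) − H(w̃)‖_F ≤ 4nR·exp(2B). -/
import Mathlib


open RealInnerProductSpace

theorem kernel_perturb_frobenius {n d m : ℕ} (hm : 0 < m) (B R : ℝ)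
    (hR0 : 0 < R) (hR : R ≤ 0.025)
    (x : Fin n → EuclideanSpace ℝ (Fin d))
    (w wt : Fin m → EuclideanSpace ℝ (Fin d))
    (hx : ∀ k, ‖x k‖ ≤ 1)
    (hwt : ∀ r, ‖wt r - w r‖ ≤ R)
    (hB : ∀ r k, |⟪w r, x k⟫| ≤ B)
    (H : (Fin m → EuclideanSpace ℝ (Fin d)) → Matrix (Fin n) (Fin n) ℝ)
    (hH : ∀ u i j, H u i j =
      (1 / (m : ℝ)) * ∑ r, ⟪x i, x j⟫ * Real.exp ⟪u r, x i⟫ * Real.exp ⟪u r, x j⟫) :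
    Real.sqrt (∑ i, ∑ j, (H w i j - H wt i j) ^ 2) ≤
      4 * (n : ℝ) * R * Real.exp (2 * B) := by
  set C : ℝ := 4 * R * Real.exp (2 * B) with hC
  have hCpos : 0 ≤ C := by positivity
  -- entry bound
  have hentry : ∀ i j, |H w i j - H wt i j| ≤ C := by
    intro i j
    rw [hH, hH, ← mul_sub, ← Finset.sum_sub_distrib]
    have hterm : ∀ r : Fin m,
        |⟪x i, x j⟫ * Real.exp ⟪w r, x i⟫ * Real.exp ⟪w r, x j⟫ -
         ⟪x i, x j⟫ * Real.exp ⟪wt r, x i⟫ * Real.exp ⟪wt r, x j⟫| ≤ C := by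
      intro r
      set a := ⟪w r, x i⟫
      set b := ⟪w r, x j⟫
      set a' := ⟪wt r, x i⟫
      set b' := ⟪wt r, x j⟫
      have hxij : |⟪x i, x j⟫| ≤ 1 := by
        calc |⟪x i, x j⟫| ≤ ‖x i‖ * ‖x j‖ := abs_real_inner_le_norm _ _
        _ ≤ 1 * 1 := by
            exact mul_le_mul (hx i) (hx j) (norm_nonneg _) zero_le_one
        _ = 1 := by ring
      have hda : |a' - a| ≤ R := by
        have : a' - a = ⟪wt r - w r, x i⟫ := by
          simp [a, a', inner_sub_left]
        rw [this]
        calc |⟪wt r - w r, x i⟫| ≤ ‖wt r - w r‖ * ‖x i‖ := abs_real_inner_le_norm _ _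
        _ ≤ R * 1 := mul_le_mul (hwt r) (hx i) (norm_nonneg _) (le_of_lt hR0)
        _ = R := by ring
      have hdb : |b' - b| ≤ R := by
        have : b' - b = ⟪wt r - w r, x j⟫ := by
          simp [b, b', inner_sub_left]
        rw [this]
        calc |⟪wt r - w r, x j⟫| ≤ ‖wt r - w r‖ * ‖x j‖ := abs_real_inner_le_norm _ _
        _ ≤ R * 1 := mul_le_mul (hwt r) (hx j) (norm_nonneg _) (le_of_lt hR0)
        _ = R := by ring
      have hδ : |(a' + b') - (a + b)| ≤ 2 * R := by
        calc |(a' + b') - (a + b)| = |(a' - a) + (b' - b)| := by ring_nf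
        _ ≤ |a' - a| + |b' - b| := abs_add_le _ _
        _ ≤ R + R := add_le_add hda hdb
        _ = 2 * R := by ring
      have hδ1 : |(a' + b') - (a + b)| ≤ 1 := by nlinarith
      have hexp : |Real.exp (a + b) - Real.exp (a' + b')| ≤ C := by
        have h1 : Real.exp (a + b) - Real.exp (a' + b') =
            Real.exp (a + b) * (1 - Real.exp ((a' + b') - (a + b))) := by
          rw [mul_sub, mul_one, ← Real.exp_add]; ring_nf
        rw [h1, abs_mul, Real.abs_exp]
        have h2 : |1 - Real.exp ((a' + b') - (a + b))| ≤ 4 * R := by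
          rw [abs_sub_comm]
          calc |Real.exp ((a' + b') - (a + b)) - 1| ≤ 2 * |(a' + b') - (a + b)| :=
            Real.abs_exp_sub_one_le hδ1
          _ ≤ 2 * (2 * R) := by linarith
          _ = 4 * R := by ring
        have h3 : Real.exp (a + b) ≤ Real.exp (2 * B) := by
          apply Real.exp_le_exp.mpr
          have := hB r i
          have := hB r j
          have := abs_le.mp (hB r i)
          have := abs_le.mp (hB r j)
          simp only [a, b]; linarith [(abs_le.mp (hB r i)).2, (abs_le.mp (hB r j)).2]
        calc Real.exp (a + b) * |1 - Real.exp ((a' + b') - (a + b))|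
            ≤ Real.exp (2 * B) * (4 * R) := by
              apply mul_le_mul h3 h2 (abs_nonneg _) (Real.exp_nonneg _)
        _ = C := by rw [hC]; ring
      calc |⟪x i, x j⟫ * Real.exp a * Real.exp b -
            ⟪x i, x j⟫ * Real.exp a' * Real.exp b'|
          = |⟪x i, x j⟫| * |Real.exp (a + b) - Real.exp (a' + b')| := by
            rw [← abs_mul, Real.exp_add, Real.exp_add]; ring_nf
      _ ≤ 1 * C := mul_le_mul hxij hexp (abs_nonneg _) zero_le_one
      _ = C := one_mul C
    rw [abs_mul]
    have hsum : |∑ r, (⟪x i, x j⟫ * Real.exp ⟪w r, x i⟫ * Real.exp ⟪w r, x j⟫ -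
        ⟪x i, x j⟫ * Real.exp ⟪wt r, x i⟫ * Real.exp ⟪wt r, x j⟫)| ≤ m * C := by
      calc |∑ r, (⟪x i, x j⟫ * Real.exp ⟪w r, x i⟫ * Real.exp ⟪w r, x j⟫ -
          ⟪x i, x j⟫ * Real.exp ⟪wt r, x i⟫ * Real.exp ⟪wt r, x j⟫)|
          ≤ ∑ r, |⟪x i, x j⟫ * Real.exp ⟪w r, x i⟫ * Real.exp ⟪w r, x j⟫ -
            ⟪x i, x j⟫ * Real.exp ⟪wt r, x i⟫ * Real.exp ⟪wt r, x j⟫| :=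
            Finset.abs_sum_le_sum_abs _ _
      _ ≤ ∑ _r : Fin m, C := Finset.sum_le_sum fun r _ => hterm r
      _ = m * C := by simp [mul_comm]
    have hm' : (0:ℝ) < m := Nat.cast_pos.mpr hm
    rw [abs_of_nonneg (by positivity : (0:ℝ) ≤ 1 / (m:ℝ))]
    calc 1 / (m:ℝ) * |∑ r, (⟪x i, x j⟫ * Real.exp ⟪w r, x i⟫ * Real.exp ⟪w r, x j⟫ -
          ⟪x i, x j⟫ * Real.exp ⟪wt r, x i⟫ * Real.exp ⟪wt r, x j⟫)|
        ≤ 1 / (m:ℝ) * ((m:ℝ) * C) := by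
          apply mul_le_mul_of_nonneg_left hsum (by positivity)
    _ = C := by field_simp
  -- sum bound
  have hsumbound : ∑ i, ∑ j, (H w i j - H wt i j) ^ 2 ≤ (n : ℝ)^2 * C^2 := by
    calc ∑ i, ∑ j, (H w i j - H wt i j) ^ 2
        ≤ ∑ _i : Fin n, ∑ _j : Fin n, C^2 := by
          apply Finset.sum_le_sum; intro i _
          apply Finset.sum_le_sum; intro j _
          have := hentry i j
          nlinarith [abs_nonneg (H w i j - H wt i j), sq_abs (H w i j - H wt i j)]
    _ = (n : ℝ)^2 * C^2 := by simp; ring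
  calc Real.sqrt (∑ i, ∑ j, (H w i j - H wt i j) ^ 2)
      ≤ Real.sqrt ((n : ℝ)^2 * C^2) := Real.sqrt_le_sqrt hsumbound
  _ = (n : ℝ) * C := by
      rw [← mul_pow, Real.sqrt_sq (by positivity)]
  _ = 4 * (n : ℝ) * R * Real.exp (2 * B) := by rw [hC]; ring
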